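/- Let p(μ, Σ; x) denote the density of a multivariate normal with mean μ and covariance Σ evaluated at x. Let Σ_E, Ω be positive definite, and A, B matrices with B^T Ω^{-1} B invertible. Define Ω̄ = (B^T Ω^{-1} B)^{-1}, Ā = -Ω̄ B^T Ω^{-1} A, b̄ = -Ω̄ B^T Ω^{-1} c, Θ̄ = (Σ_E^{-1} - Ā^T Ω̄^{-1} Ā + A^T Ω^{-1} A)^{-1}, R̄ = Θ̄ Σ_E^{-1}, s̄ = Θ̄(Ā^T Ω̄^{-1} b̄ - A^T Ω^{-1} c). Then p(β, Σ_E; b̂) · exp(-½(Ab̂ + Bγ̂ + c)^T Ω^{-1} (Ab̂ + Bγ̂ + c)) = K(β) · p(R̄β + s̄, Θ̄; b̂) · p(Āb̂ + b̄, Ω̄; γ̂), where K(β) depends only on β (not on b̂ or γ̂). -/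

import Mathlib

open Matrix

/-! Complete the square twice. For fixed `b̂` the exponent is a quadratic in `γ̂` with Hessian
`Bᵀ Ω⁻¹ B = Ω̄⁻¹`, minimised at `Ā b̂ + b̄`; what remains is a quadratic in `b̂` whose Hessian is
`Θ̄⁻¹` and whose minimiser is `R̄ β + s̄`. Everything left over depends on `β` only, and together
with the normalising constants of the two new densities it makes up `K β`. -/

/-- Multivariate normal density with mean `μ` and covariance `S`, evaluated at `x`. -/
noncomputable def gaussDensity {d : ℕ} (μ : Fin d → ℝ) (S : Matrix (Fin d) (Fin d) ℝ)
    (x : Fin d → ℝ) : ℝ :=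
  (1 / Real.sqrt ((2 * Real.pi) ^ d * S.det)) *
    Real.exp (-(1 / 2) * ((x - μ) ⬝ᵥ (S⁻¹ *ᵥ (x - μ))))

section QuadForm

variable {R : Type*} [CommRing R] {m n : Type*} [Fintype m] [Fintype n]

def quadForm (S : Matrix n n R) (x : n → R) : R := x ⬝ᵥ (S *ᵥ x)

theorem Matrix.IsSymm.dotProduct_mulVec_comm {S : Matrix n n R} (hS : S.IsSymm) (x y : n → R) :
    x ⬝ᵥ (S *ᵥ y) = y ⬝ᵥ (S *ᵥ x) := by
  rw [dotProduct_mulVec, ← mulVec_transpose, hS.eq, dotProduct_comm]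

omit [Fintype n] in
theorem Matrix.IsSymm.transpose_mul_mul {S : Matrix m m R} (hS : S.IsSymm) (B : Matrix m n R) :
    (Bᵀ * S * B).IsSymm := by
  rw [IsSymm, transpose_mul, transpose_mul, hS.eq, transpose_transpose, Matrix.mul_assoc]

theorem quadForm_neg (S : Matrix n n R) (x : n → R) : quadForm S (-x) = quadForm S x := by
  simp only [quadForm, mulVec_neg, dotProduct_neg, neg_dotProduct, neg_neg]

theorem quadForm_add {S : Matrix n n R} (hS : S.IsSymm) (x y : n → R) :
    quadForm S (x + y) = quadForm S x + 2 * (x ⬝ᵥ (S *ᵥ y)) + quadForm S y := by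
  simp only [quadForm, mulVec_add, dotProduct_add, add_dotProduct]
  rw [hS.dotProduct_mulVec_comm y x]
  ring

theorem quadForm_sub {S : Matrix n n R} (hS : S.IsSymm) (x y : n → R) :
    quadForm S (x - y) = quadForm S x - 2 * (x ⬝ᵥ (S *ᵥ y)) + quadForm S y := by
  rw [sub_eq_add_neg, quadForm_add hS, quadForm_neg, mulVec_neg, dotProduct_neg]
  ring

theorem quadForm_mulVec (S : Matrix m m R) (L : Matrix m n R) (x : n → R) :
    quadForm S (L *ᵥ x) = quadForm (Lᵀ * S * L) x := by
  rw [quadForm, quadForm, dotProduct_comm, dotProduct_mulVec, ← mulVec_transpose, ← mulVec_mulVec,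
    ← mulVec_mulVec, dotProduct_comm]

theorem quadForm_mulVec_add {S : Matrix m m R} (hS : S.IsSymm) (L : Matrix m n R) (x : n → R)
    (d : m → R) :
    quadForm S (L *ᵥ x + d) = quadForm (Lᵀ * S * L) x + 2 * (x ⬝ᵥ (Lᵀ *ᵥ (S *ᵥ d))) +
      quadForm S d := by
  rw [quadForm_add hS, quadForm_mulVec, dotProduct_mulVec x, vecMul_transpose]

theorem quadForm_add_left (S T : Matrix n n R) (x : n → R) :
    quadForm (S + T) x = quadForm S x + quadForm T x := by
  simp only [quadForm, add_mulVec, dotProduct_add]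

theorem quadForm_sub_left (S T : Matrix n n R) (x : n → R) :
    quadForm (S - T) x = quadForm S x - quadForm T x := by
  simp only [quadForm, sub_mulVec, dotProduct_sub]

theorem quadForm_add_mulVec_eq_of_mulVec_eq {S : Matrix m m R} (hS : S.IsSymm)
    (B : Matrix m n R) (v : m → R) (γ γ₀ : n → R)
    (hγ₀ : (Bᵀ * S * B) *ᵥ γ₀ = -(Bᵀ *ᵥ (S *ᵥ v))) :
    quadForm S (v + B *ᵥ γ) =
      quadForm (Bᵀ * S * B) (γ - γ₀) + (quadForm S v - quadForm (Bᵀ * S * B) γ₀) := by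
  rw [add_comm v, quadForm_mulVec_add hS, quadForm_sub (hS.transpose_mul_mul B), hγ₀,
    dotProduct_neg]
  ring

end QuadForm

section SelectionKernel

variable {R : Type*} [CommRing R] {e k q : Type*} [Fintype e] [Fintype k] [Fintype q]
  [DecidableEq e] [DecidableEq k] [DecidableEq q]
  (SigE : Matrix e e R) (Ω : Matrix q q R) (A : Matrix q e R) (B : Matrix q k R) (c : q → R)

noncomputable def omegaBar : Matrix k k R := (Bᵀ * Ω⁻¹ * B)⁻¹

noncomputable def aBar : Matrix k e R := -(omegaBar Ω B * Bᵀ * Ω⁻¹ * A)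

noncomputable def bBar : k → R := -((omegaBar Ω B * Bᵀ * Ω⁻¹) *ᵥ c)

noncomputable def thetaBar : Matrix e e R :=
  (SigE⁻¹ - (aBar Ω A B)ᵀ * (omegaBar Ω B)⁻¹ * aBar Ω A B + Aᵀ * Ω⁻¹ * A)⁻¹

noncomputable def rBar : Matrix e e R := thetaBar SigE Ω A B * SigE⁻¹

noncomputable def sBar : e → R :=
  thetaBar SigE Ω A B *ᵥ
    ((aBar Ω A B)ᵀ *ᵥ ((omegaBar Ω B)⁻¹ *ᵥ bBar Ω B c) - Aᵀ *ᵥ (Ω⁻¹ *ᵥ c))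

variable {SigE Ω A B}

theorem omegaBar_isSymm (hΩ : Ω.IsSymm) : (omegaBar Ω B).IsSymm :=
  (hΩ.inv.transpose_mul_mul B).inv

theorem thetaBar_isSymm (hSig : SigE.IsSymm) (hΩ : Ω.IsSymm) : (thetaBar SigE Ω A B).IsSymm :=
  ((hSig.inv.sub ((omegaBar_isSymm hΩ).inv.transpose_mul_mul _)).add
    (hΩ.inv.transpose_mul_mul A)).inv

theorem omegaBar_inv (hB : IsUnit (Bᵀ * Ω⁻¹ * B).det) : (omegaBar Ω B)⁻¹ = Bᵀ * Ω⁻¹ * B :=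
  nonsing_inv_nonsing_inv _ hB

theorem thetaBar_inv (hΘ : IsUnit (thetaBar SigE Ω A B).det) :
    (thetaBar SigE Ω A B)⁻¹ =
      SigE⁻¹ - (aBar Ω A B)ᵀ * (omegaBar Ω B)⁻¹ * aBar Ω A B + Aᵀ * Ω⁻¹ * A :=
  nonsing_inv_nonsing_inv _ (isUnit_nonsing_inv_det_iff.mp hΘ)

omit [DecidableEq e] in
theorem omegaBar_inv_mulVec_aBar_add_bBar (hB : IsUnit (Bᵀ * Ω⁻¹ * B).det) (b : e → R) :
    (omegaBar Ω B)⁻¹ *ᵥ (aBar Ω A B *ᵥ b + bBar Ω B c) = -(Bᵀ *ᵥ (Ω⁻¹ *ᵥ (A *ᵥ b + c))) := by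
  have hAb : aBar Ω A B *ᵥ b + bBar Ω B c = -(omegaBar Ω B *ᵥ (Bᵀ *ᵥ (Ω⁻¹ *ᵥ (A *ᵥ b + c)))) := by
    simp only [aBar, bBar, neg_mulVec, mulVec_mulVec, mulVec_add, neg_add, Matrix.mul_assoc]
  rw [hAb, mulVec_neg, mulVec_mulVec, nonsing_inv_mul (omegaBar Ω B) (isUnit_nonsing_inv_det _ hB),
    one_mulVec]

theorem thetaBar_inv_mulVec_rBar_add_sBar (hΘ : IsUnit (thetaBar SigE Ω A B).det) (β : e → R) :
    (thetaBar SigE Ω A B)⁻¹ *ᵥ (rBar SigE Ω A B *ᵥ β + sBar SigE Ω A B c) =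
      SigE⁻¹ *ᵥ β + ((aBar Ω A B)ᵀ *ᵥ ((omegaBar Ω B)⁻¹ *ᵥ bBar Ω B c) - Aᵀ *ᵥ (Ω⁻¹ *ᵥ c)) := by
  rw [rBar, sBar, ← mulVec_mulVec, ← mulVec_add, mulVec_mulVec, nonsing_inv_mul _ hΘ, one_mulVec]

theorem exists_eq_quadForm_thetaBar_inv_add (hSig : SigE.IsSymm) (hΩ : Ω.IsSymm)
    (hΘ : IsUnit (thetaBar SigE Ω A B).det) :
    ∃ κ : (e → R) → R, ∀ β b : e → R,
      quadForm SigE⁻¹ (b - β) +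
          (quadForm Ω⁻¹ (A *ᵥ b + c) - quadForm (omegaBar Ω B)⁻¹ (aBar Ω A B *ᵥ b + bBar Ω B c)) =
        quadForm (thetaBar SigE Ω A B)⁻¹ (b - (rBar SigE Ω A B *ᵥ β + sBar SigE Ω A B c)) +
          κ β := by
  refine ⟨fun β => quadForm SigE⁻¹ β + quadForm Ω⁻¹ c - quadForm (omegaBar Ω B)⁻¹ (bBar Ω B c) -
    quadForm (thetaBar SigE Ω A B)⁻¹ (rBar SigE Ω A B *ᵥ β + sBar SigE Ω A B c), fun β b => ?_⟩
  rw [quadForm_sub (thetaBar_isSymm hSig hΩ).inv b, thetaBar_inv_mulVec_rBar_add_sBar c hΘ,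
    thetaBar_inv hΘ, quadForm_sub hSig.inv, quadForm_mulVec_add hΩ.inv,
    quadForm_mulVec_add (omegaBar_isSymm hΩ).inv, quadForm_add_left, quadForm_sub_left]
  simp only [dotProduct_add, dotProduct_sub]
  ring

theorem exists_quadForm_decomposition (hSig : SigE.IsSymm) (hΩ : Ω.IsSymm)
    (hB : IsUnit (Bᵀ * Ω⁻¹ * B).det) (hΘ : IsUnit (thetaBar SigE Ω A B).det) :
    ∃ κ : (e → R) → R, ∀ (β b : e → R) (γ : k → R),
      quadForm SigE⁻¹ (b - β) + quadForm Ω⁻¹ (A *ᵥ b + B *ᵥ γ + c) =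
        quadForm (thetaBar SigE Ω A B)⁻¹ (b - (rBar SigE Ω A B *ᵥ β + sBar SigE Ω A B c)) +
          quadForm (omegaBar Ω B)⁻¹ (γ - (aBar Ω A B *ᵥ b + bBar Ω B c)) + κ β := by
  obtain ⟨κ, hκ⟩ := exists_eq_quadForm_thetaBar_inv_add c hSig hΩ hΘ
  refine ⟨κ, fun β b γ => ?_⟩
  have hγ := quadForm_add_mulVec_eq_of_mulVec_eq hΩ.inv B (A *ᵥ b + c) γ
    (aBar Ω A B *ᵥ b + bBar Ω B c)
    (by rw [← omegaBar_inv hB, omegaBar_inv_mulVec_aBar_add_bBar c hB])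
  rw [add_right_comm, hγ, ← omegaBar_inv hB]
  linear_combination hκ β b

end SelectionKernel

theorem gaussDensity_eq {d : ℕ} (μ : Fin d → ℝ) (S : Matrix (Fin d) (Fin d) ℝ) (x : Fin d → ℝ) :
    gaussDensity μ S x =
      (Real.sqrt ((2 * Real.pi) ^ d * S.det))⁻¹ * Real.exp (-(1 / 2) * quadForm S⁻¹ (x - μ)) := by
  rw [gaussDensity, quadForm, one_div]

theorem gaussDensity_mul_exp_eq {d d' : ℕ} {μ m x : Fin d → ℝ} {S T : Matrix (Fin d) (Fin d) ℝ}
    {ν y : Fin d' → ℝ} {U : Matrix (Fin d') (Fin d') ℝ} {E κ : ℝ} (hT : 0 < T.det)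
    (hU : 0 < U.det)
    (h : quadForm S⁻¹ (x - μ) + E = quadForm T⁻¹ (x - m) + quadForm U⁻¹ (y - ν) + κ) :
    gaussDensity μ S x * Real.exp (-(1 / 2) * E) =
      Real.sqrt ((2 * Real.pi) ^ d * T.det) * Real.sqrt ((2 * Real.pi) ^ d' * U.det) /
          Real.sqrt ((2 * Real.pi) ^ d * S.det) * Real.exp (-(1 / 2) * κ) *
        gaussDensity m T x * gaussDensity ν U y := by
  have hexp : Real.exp (-(1 / 2) * quadForm S⁻¹ (x - μ)) * Real.exp (-(1 / 2) * E) =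
      Real.exp (-(1 / 2) * quadForm T⁻¹ (x - m)) * Real.exp (-(1 / 2) * quadForm U⁻¹ (y - ν)) *
        Real.exp (-(1 / 2) * κ) := by
    simp only [← Real.exp_add]
    congr 1
    linear_combination (-(1 / 2) : ℝ) * h
  have hZT : 0 < Real.sqrt ((2 * Real.pi) ^ d * T.det) := by positivity
  have hZU : 0 < Real.sqrt ((2 * Real.pi) ^ d' * U.det) := by positivity
  rw [gaussDensity_eq, gaussDensity_eq, gaussDensity_eq, mul_assoc, hexp]
  field_simp

/-- Exact factorization of the selection-informed Gaussian kernel: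
`p(β,Σ_E;b̂)·exp(-½(Ab̂+Bγ̂+c)ᵀΩ⁻¹(Ab̂+Bγ̂+c)) = K(β)·p(R̄β+s̄,Θ̄;b̂)·p(Āb̂+b̄,Ω̄;γ̂)`. -/
theorem stmt5 (eN k q : ℕ)
    (SigE : Matrix (Fin eN) (Fin eN) ℝ) (Ω : Matrix (Fin q) (Fin q) ℝ)
    (A : Matrix (Fin q) (Fin eN) ℝ) (B : Matrix (Fin q) (Fin k) ℝ)
    (c : Fin q → ℝ)
    (hSig : SigE.PosDef) (hΩ : Ω.PosDef)
    (hB : IsUnit (Bᵀ * Ω⁻¹ * B).det) :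
    let Ωb := (Bᵀ * Ω⁻¹ * B)⁻¹
    let Ab := -(Ωb * Bᵀ * Ω⁻¹ * A)
    let bb := -((Ωb * Bᵀ * Ω⁻¹) *ᵥ c)
    let Θb := (SigE⁻¹ - Abᵀ * Ωb⁻¹ * Ab + Aᵀ * Ω⁻¹ * A)⁻¹
    let Rb := Θb * SigE⁻¹
    let sb := Θb *ᵥ (Abᵀ *ᵥ (Ωb⁻¹ *ᵥ bb) - Aᵀ *ᵥ (Ω⁻¹ *ᵥ c))
    Θb.PosDef → Ωb.PosDef →
      ∃ K : (Fin eN → ℝ) → ℝ, ∀ (β bhat : Fin eN → ℝ) (γhat : Fin k → ℝ),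
        gaussDensity β SigE bhat *
            Real.exp (-(1 / 2) *
              ((A *ᵥ bhat + B *ᵥ γhat + c) ⬝ᵥ (Ω⁻¹ *ᵥ (A *ᵥ bhat + B *ᵥ γhat + c)))) =
          K β * gaussDensity (Rb *ᵥ β + sb) Θb bhat *
            gaussDensity (Ab *ᵥ bhat + bb) Ωb γhat := by
  intro Ωb Ab bb Θb Rb sb hΘ hΩb
  obtain ⟨κ, hκ⟩ := exists_quadForm_decomposition c
    (isHermitian_iff_isSymm.mp hSig.isHermitian) (isHermitian_iff_isSymm.mp hΩ.isHermitian) hB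
    (isUnit_iff_ne_zero.mpr hΘ.det_pos.ne')
  exact ⟨_, fun β b γ => gaussDensity_mul_exp_eq hΘ.det_pos hΩb.det_pos (hκ β b γ)⟩
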